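/- arXiv:0803.4137 — 2 statements merged into one kernel-verified Lean document; each statement's English description precedes it below -/
import Mathlib

section
/- If S is a compact connected orientable surface with χ(S) < 0 and nonempty boundary, then S admits a finite cover with positive genus. -/
/-!
Model of a compact connected orientable surface `S` of genus `g` with `m + 1 ≥ 1`
boundary components: its fundamental group is free on generators
`a_1, b_1, …, a_g, b_g, c_1, …, c_m`, where the boundary circles represent the
conjugacy classes of `c_1, …, c_m` and of
`(∏ i ⁅a_i, b_i⁆ · c_1 ⋯ c_m)⁻¹` (the last boundary component).
`H_1(S;ℤ)` is the abelianization of this free group, and `H_1(∂S;ℤ) ≅ ℤ^{m+1}`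
has basis the fundamental classes of the boundary circles.
-/

/-- Generators of π₁ of the surface of genus `g` with `m+1` boundary components. -/
abbrev SurfGen (g m : ℕ) := (Fin g × Bool) ⊕ Fin m

/-- π₁ of the surface: free of rank `2g + m`. -/
abbrev SurfPi1 (g m : ℕ) := FreeGroup (SurfGen g m)

open scoped commutatorElement

/-- The commutator `⁅a_i, b_i⁆` of the `i`-th handle generators. -/
def handleComm (g m : ℕ) (i : Fin g) : SurfPi1 g m :=
  ⁅(FreeGroup.of (Sum.inl (i, false)) : SurfPi1 g m), FreeGroup.of (Sum.inl (i, true))⁆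

/-- The element of π₁ represented by the `i`-th boundary circle (with its
induced orientation). -/
def surfBoundary (g m : ℕ) (i : Fin (m + 1)) : SurfPi1 g m :=
  if h : (i : ℕ) < m then FreeGroup.of (Sum.inr ⟨i, h⟩)
  else ((List.ofFn (handleComm g m)).prod *
      (List.ofFn fun j : Fin m => (FreeGroup.of (Sum.inr j) : SurfPi1 g m)).prod)⁻¹

/-!
Covering-space dictionary used below.  A finite cover of `S` corresponds to a
finite-index subgroup `K ≤ π₁(S)`.  By Nielsen–Schreier and multiplicativity of
Euler characteristic, the cover has `χ = [π₁(S) : K] · (2 - 2g - (m+1))`, and its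
boundary components over `∂_i` correspond to the double cosets `K\π₁(S)/⟨∂_i⟩`.
A compact connected orientable surface has positive genus iff `χ + #∂ ≤ 0`.
-/

/-!
The cover is the cyclic `(m + 1)`-fold cover pulled back from the homomorphism
`π₁(S) → ℤ/(m+1)` that kills the handle generators and sends each `c_j` to `1`.
Every boundary circle maps to a generator, hence lifts to a single boundary circle:
the cover has `χ = (m+1) χ(S)` but still only `m + 1` boundary components, so
`χ + #∂ = (m+1)(χ(S) + 1) ≤ 0` once `χ(S) < 0`.
-/

open Multiplicative

section

variable {G H : Type*} [Group G] [Group H]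

theorem MonoidHom.surjective_of_zpowers_eq_top (f : G →* H) {c : G}
    (hc : Subgroup.zpowers (f c) = ⊤) : Function.Surjective f := fun h => by
  obtain ⟨k, rfl⟩ := Subgroup.mem_zpowers_iff.mp (hc ▸ Subgroup.mem_top h)
  exact ⟨c ^ k, map_zpow f c k⟩

theorem DoubleCoset.card_quotient_ker_zpowers (f : G →* H) {c : G}
    (hc : Subgroup.zpowers (f c) = ⊤) :
    Nat.card (DoubleCoset.Quotient (f.ker : Set G) (Subgroup.zpowers c : Set G)) = 1 := by
  refine Nat.card_eq_one_iff_unique.mpr ⟨⟨fun a b => ?_⟩, ⟨DoubleCoset.mk _ _ 1⟩⟩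
  induction a using Quotient.inductionOn' with | h x => ?_
  induction b using Quotient.inductionOn' with | h y => ?_
  refine (DoubleCoset.eq f.ker (Subgroup.zpowers c) x y).mpr ?_
  obtain ⟨k, hk⟩ := Subgroup.mem_zpowers_iff.mp (hc ▸ Subgroup.mem_top (f (x⁻¹ * y)))
  refine ⟨y * (c ^ k)⁻¹ * x⁻¹, ?_, c ^ k, Subgroup.zpow_mem_zpowers c k, by group⟩
  rw [MonoidHom.mem_ker, map_mul, map_mul, map_inv, map_zpow, hk, map_mul, map_inv]
  group

end

theorem ZMod.zpowers_ofAdd_one (n : ℕ) :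
    Subgroup.zpowers (ofAdd (1 : ZMod n)) = ⊤ :=
  Subgroup.eq_top_iff' _ |>.mpr fun x => Subgroup.mem_zpowers_iff.mpr
    ⟨(toAdd x).cast, by rw [← ofAdd_zsmul, zsmul_one, ZMod.intCast_zmod_cast, ofAdd_toAdd]⟩

noncomputable def boundaryCharacter (g m : ℕ) : SurfPi1 g m →* Multiplicative (ZMod (m + 1)) :=
  FreeGroup.lift (Sum.elim 1 fun _ => ofAdd 1)

theorem boundaryCharacter_handleComm (g m : ℕ) (i : Fin g) :
    boundaryCharacter g m (handleComm g m i) = 1 := by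
  rw [handleComm, map_commutatorElement, commutatorElement_eq_one_iff_commute]
  exact Commute.all _ _

theorem boundaryCharacter_of_inr (g m : ℕ) (j : Fin m) :
    boundaryCharacter g m (FreeGroup.of (Sum.inr j)) = ofAdd 1 :=
  FreeGroup.lift_apply_of

theorem boundaryCharacter_surfBoundary (g m : ℕ) (i : Fin (m + 1)) :
    boundaryCharacter g m (surfBoundary g m i) = ofAdd 1 := by
  rw [surfBoundary]
  split_ifs
  · exact boundaryCharacter_of_inr g m _
  · have hneg : -(m : ZMod (m + 1)) = 1 :=
      neg_eq_of_add_eq_zero_right (by exact_mod_cast ZMod.natCast_self (m + 1))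
    rw [map_inv, map_mul, map_list_prod, map_list_prod, List.map_ofFn, List.map_ofFn]
    simp only [Function.comp_def, boundaryCharacter_handleComm, boundaryCharacter_of_inr,
      List.ofFn_const, List.prod_replicate, one_pow, one_mul, ← ofAdd_nsmul, nsmul_one,
      ← ofAdd_neg, hneg]

/-- If `S` is a compact connected orientable surface with
`χ(S) < 0` and nonempty boundary, then `S` admits a finite cover of positive
genus: there is a finite-index subgroup `K` of `π₁(S)` such that the
corresponding cover (with Euler characteristic `index · χ(S)` and with boundary
components counted by double cosets) has positive genus. -/
theorem finite_cover_with_positive_genus (g m : ℕ)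
    (hχ : (2 : ℤ) - 2 * g - (m + 1) < 0) :
    ∃ K : Subgroup (SurfPi1 g m), K.index ≠ 0 ∧
      (K.index : ℤ) * (2 - 2 * g - (m + 1)) +
        ∑ i : Fin (m + 1),
          (Nat.card (DoubleCoset.Quotient (K : Set (SurfPi1 g m))
            (Subgroup.zpowers (surfBoundary g m i) : Set (SurfPi1 g m))) : ℤ) ≤ 0 := by
  set f := boundaryCharacter g m
  have hgen (i : Fin (m + 1)) : Subgroup.zpowers (f (surfBoundary g m i)) = ⊤ := by
    rw [boundaryCharacter_surfBoundary, ZMod.zpowers_ofAdd_one]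
  have hindex : f.ker.index = m + 1 := by
    rw [Subgroup.index_ker, MonoidHom.range_eq_top.mpr (f.surjective_of_zpowers_eq_top (hgen 0)),
      Subgroup.card_top, Nat.card_congr toAdd, Nat.card_zmod]
  refine ⟨f.ker, by rw [hindex]; exact m.succ_ne_zero, ?_⟩
  simp only [hindex, DoubleCoset.card_quotient_ker_zpowers f (hgen _), Nat.cast_one,
    Finset.sum_const, Finset.card_univ, Fintype.card_fin, nsmul_eq_mul, mul_one]
  push_cast
  nlinarith
end

section
/- If S is a compact connected orientable surface with positive genus and nonempty boundary, then S admits a connected degree 2 cover S' in which every boundary component of S has exactly two preimage components, each mapping with degree 1. -/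
open scoped commutatorElement

/-!
Covering-space dictionary.  A connected degree-2 cover of `S` corresponds to an
index-2 subgroup `K ≤ π₁(S)`.  The boundary components of the cover lying over
`∂_i` correspond to the double cosets `K\π₁(S)/⟨∂_i⟩`, and the component
corresponding to the coset of `u` covers `∂_i` with degree the least `n > 0`
with `u ∂_i^n u⁻¹ ∈ K`; so degree `1` for every component means
`u ∂_i u⁻¹ ∈ K` for all `u`.
-/

/-!
Let `K` be the kernel of the mod-2 intersection number with a curve dual to `a_1`, i.e. of the
homomorphism `π₁(S) → ℤ/2` sending `a_1` to `1` and every other generator to `0`. The target is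
abelian and the `c_j` are killed, so every boundary class lies in `K`. As `K` is normal and contains
`⟨∂_i⟩`, the double cosets `K\π₁(S)/⟨∂_i⟩` are just the two cosets of `K`.
-/

theorem DoubleCoset.setoid_eq_leftRel_of_le {G : Type*} [Group G] {K H : Subgroup G} [K.Normal]
    (hHK : H ≤ K) : ⇑(DoubleCoset.setoid (K : Set G) H) = ⇑(QuotientGroup.leftRel K) := by
  ext x y
  rw [DoubleCoset.rel_iff, QuotientGroup.leftRel_apply]
  constructor
  · rintro ⟨a, ha, b, hb, rfl⟩
    have hconj : x⁻¹ * a * x ∈ K := Subgroup.Normal.conj_mem' ‹_› a ha x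
    simpa [mul_assoc] using K.mul_mem hconj (hHK hb)
  · intro h
    exact ⟨y * x⁻¹, by simpa [mul_assoc] using Subgroup.Normal.conj_mem ‹_› _ h x, 1, H.one_mem,
      by group⟩

theorem DoubleCoset.card_quotient_eq_index_of_le {G : Type*} [Group G] {K H : Subgroup G}
    [K.Normal] (hHK : H ≤ K) : Nat.card (DoubleCoset.Quotient (K : Set G) H) = K.index :=
  Nat.card_congr (Quotient.congrRight fun x y => by
    rw [DoubleCoset.setoid_eq_leftRel_of_le hHK])

theorem map_surfBoundary_eq_one {g m : ℕ} {A : Type*} [CommGroup A] (f : SurfPi1 g m →* A)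
    (hf : ∀ j, f (FreeGroup.of (Sum.inr j)) = 1) (i : Fin (m + 1)) :
    f (surfBoundary g m i) = 1 := by
  unfold surfBoundary
  split
  · exact hf _
  · have hcomm (a b : A) : ⁅a, b⁆ = 1 := commutatorElement_eq_one_iff_commute.mpr (.all a b)
    simp [map_list_prod, List.map_ofFn, Function.comp_def, handleComm, hf, hcomm]

def handleParity (g m : ℕ) (i : Fin g) : SurfPi1 g m →* Multiplicative (ZMod 2) :=
  FreeGroup.lift fun x => if x = Sum.inl (i, false) then Multiplicative.ofAdd 1 else 1

theorem handleParity_surjective {g m : ℕ} (i : Fin g) :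
    Function.Surjective (handleParity g m i) := by
  intro x
  induction x using Multiplicative.rec with
  | _ x =>
    fin_cases x
    · exact ⟨1, map_one _⟩
    · exact ⟨FreeGroup.of (Sum.inl (i, false)), by simp [handleParity]; rfl⟩

theorem index_ker_handleParity {g m : ℕ} (i : Fin g) : (handleParity g m i).ker.index = 2 := by
  rw [Subgroup.index_ker, MonoidHom.range_eq_top.mpr (handleParity_surjective i),
    Subgroup.card_top]
  simp

/-- If `S` is a compact connected orientable surface with
positive genus and nonempty boundary, then `S` admits a connected degree-2
cover in which every boundary component of `S` has exactly two preimage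
components, each mapping with degree 1. -/
theorem double_cover_splitting_boundary (g m : ℕ) (hg : 0 < g) :
    ∃ K : Subgroup (SurfPi1 g m), K.index = 2 ∧
      ∀ i : Fin (m + 1),
        (∀ u : SurfPi1 g m, u * surfBoundary g m i * u⁻¹ ∈ K) ∧
        Nat.card (DoubleCoset.Quotient (K : Set (SurfPi1 g m))
          (Subgroup.zpowers (surfBoundary g m i) : Set (SurfPi1 g m))) = 2 := by
  set φ := handleParity g m ⟨0, hg⟩
  have hboundary (i : Fin (m + 1)) : surfBoundary g m i ∈ φ.ker :=
    map_surfBoundary_eq_one φ (fun j => by simp [φ, handleParity]) i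
  refine ⟨φ.ker, index_ker_handleParity _, fun i => ⟨fun u => ?_, ?_⟩⟩
  · exact φ.normal_ker.conj_mem _ (hboundary i) u
  · rw [DoubleCoset.card_quotient_eq_index_of_le (Subgroup.zpowers_le.mpr (hboundary i))]
    exact index_ker_handleParity _
end
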